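/- For jointly distributed random variables X and Y with marginal distributions p and q, the mutual information satisfies I(X;Y) ≤ H(p) + H(q) − H(p ∧ q) ≤ min(H(p), H(q)). -/

import Mathlib

open Finset

/-- Majorization via prefix sums (vectors as functions ℕ → ℝ, padded with zeros). -/
def Maj (p q : ℕ → ℝ) : Prop :=
  ∀ i : ℕ, ∑ k ∈ Finset.range i, p k ≤ ∑ k ∈ Finset.range i, q k

/-- A probability vector of length `n`, sorted non-increasingly, zero beyond `n`. -/
def IsProbVec (n : ℕ) (p : ℕ → ℝ) : Prop :=
  (∀ i, 0 ≤ p i) ∧ (∀ i j : ℕ, i ≤ j → p j ≤ p i) ∧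
  (∑ k ∈ Finset.range n, p k = 1) ∧ (∀ i, n ≤ i → p i = 0)

/-- The greatest lower bound `p ∧ q` in the majorization lattice. -/
noncomputable def meet (p q : ℕ → ℝ) : ℕ → ℝ := fun i =>
  min (∑ k ∈ Finset.range (i + 1), p k) (∑ k ∈ Finset.range (i + 1), q k) -
  min (∑ k ∈ Finset.range i, p k) (∑ k ∈ Finset.range i, q k)

/-- Shannon entropy (base 2) of the first `n` components. -/
noncomputable def H2 (n : ℕ) (p : ℕ → ℝ) : ℝ :=
  ∑ k ∈ Finset.range n, -(p k * Real.logb 2 (p k))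

/-- Shannon entropy (base 2) of the entries of an `n × m` matrix. -/
noncomputable def Hmat (n m : ℕ) (M : ℕ → ℕ → ℝ) : ℝ :=
  ∑ i ∈ Finset.range n, ∑ j ∈ Finset.range m, -(M i j * Real.logb 2 (M i j))

/-- `M` is a coupling of `p` and `q`: nonnegative, row sums `p`, column sums `q`. -/
def IsCoupling (n m : ℕ) (p q : ℕ → ℝ) (M : ℕ → ℕ → ℝ) : Prop :=
  (∀ i j, 0 ≤ M i j) ∧ (∀ i < n, ∑ j ∈ Finset.range m, M i j = p i) ∧
  (∀ j < m, ∑ i ∈ Finset.range n, M i j = q j)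

/-- The `half` operator: duplicates and halves each component. -/
noncomputable def half (p : ℕ → ℝ) : ℕ → ℝ := fun i => p (i / 2) / 2

/-- Iterated `half` operator. -/
noncomputable def halfIter : ℕ → (ℕ → ℝ) → (ℕ → ℝ)
  | 0, p => p
  | (i + 1), p => half (halfIter i p)

/-- Iterated majorization meet of `p 0, p 1, …, p k`. -/
noncomputable def bigMeet (p : ℕ → ℕ → ℝ) : ℕ → (ℕ → ℝ)
  | 0 => p 0
  | (k + 1) => meet (bigMeet p k) (p (k + 1))

/-! Entropy is Schur concave: if `a` is sorted and each prefix sum of `a` is at most that of `b`,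
with equal totals, then `H b ≤ H a`. This follows from the tangent-line bound for `-x log x` at
`a k` and summation by parts, the slopes `-log (a k) - 1` being nondecreasing.

The prefix sums of `p ∧ q` are the minima of those of `p` and `q`, so `H p, H q ≤ H (p ∧ q)`.
A coupling `M` is in turn majorized by `p ∧ q`: its `i` largest entries lie in at most `i` rows,
so they sum to at most the `i` largest entries of `p`, and likewise for the columns and `q`.
Hence `H (p ∧ q) ≤ H M`. -/

open Real

lemma negMulLog_le_tangent {a b : ℝ} (ha : 0 < a) (hb : 0 ≤ b) :
    negMulLog b ≤ negMulLog a + (-log a - 1) * (b - a) := by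
  have hmul : negMulLog b = b / a * negMulLog a + a * negMulLog (b / a) := by
    rw [← negMulLog_mul, mul_div_cancel₀ b ha.ne']
  have hle := mul_le_mul_of_nonneg_left (negMulLog_le_one_sub_self (div_nonneg hb ha.le)) ha.le
  rw [hmul]
  simp only [negMulLog] at hle ⊢
  field_simp at hle ⊢
  nlinarith

lemma sum_range_mul_nonpos_of_monotone {N : ℕ} {c d : ℕ → ℝ}
    (hc : ∀ k, k + 1 < N → c k ≤ c (k + 1))
    (hd : ∀ i ≤ N, 0 ≤ ∑ k ∈ range i, d k) (hdN : ∑ k ∈ range N, d k = 0) :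
    ∑ k ∈ range N, c k * d k ≤ 0 := by
  have := sum_range_by_parts c d N
  simp only [smul_eq_mul] at this
  rw [this, hdN, mul_zero, zero_sub, neg_nonpos]
  refine sum_nonneg fun k hk => mul_nonneg ?_ (hd _ ?_)
  · rw [mem_range] at hk
    have := hc k (by omega)
    linarith
  · rw [mem_range] at hk
    omega

lemma sum_negMulLog_le_of_prefix_le_of_pos {N : ℕ} {a b : ℕ → ℝ} (ha : Antitone a)
    (hpos : ∀ k < N, 0 < a k) (hb0 : ∀ k, 0 ≤ b k)
    (hpre : ∀ i ≤ N, ∑ k ∈ range i, a k ≤ ∑ k ∈ range i, b k)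
    (htot : ∑ k ∈ range N, a k = ∑ k ∈ range N, b k) :
    ∑ k ∈ range N, negMulLog (b k) ≤ ∑ k ∈ range N, negMulLog (a k) := by
  have hslope : ∑ k ∈ range N, (-log (a k) - 1) * (b k - a k) ≤ 0 := by
    refine sum_range_mul_nonpos_of_monotone (fun k hk => ?_) (fun i hi => ?_) ?_
    · have := log_le_log (hpos _ hk) (ha k.le_succ)
      linarith
    · rw [sum_sub_distrib, sub_nonneg]
      exact hpre i hi
    · rw [sum_sub_distrib, htot, sub_self]
  calc ∑ k ∈ range N, negMulLog (b k)
      ≤ ∑ k ∈ range N, (negMulLog (a k) + (-log (a k) - 1) * (b k - a k)) :=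
        sum_le_sum fun k hk => negMulLog_le_tangent (hpos k (mem_range.1 hk)) (hb0 k)
    _ ≤ ∑ k ∈ range N, negMulLog (a k) := by
        rw [sum_add_distrib]
        linarith

lemma sum_negMulLog_le_of_prefix_le {N : ℕ} {a b : ℕ → ℝ} (ha : Antitone a)
    (ha0 : ∀ k, 0 ≤ a k) (hb0 : ∀ k, 0 ≤ b k)
    (hpre : ∀ i ≤ N, ∑ k ∈ range i, a k ≤ ∑ k ∈ range i, b k)
    (htot : ∑ k ∈ range N, a k = ∑ k ∈ range N, b k) :
    ∑ k ∈ range N, negMulLog (b k) ≤ ∑ k ∈ range N, negMulLog (a k) := by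
  induction N with
  | zero => simp
  | succ N ih =>
    rcases (ha0 N).lt_or_eq with hN | hN
    · exact sum_negMulLog_le_of_prefix_le_of_pos ha
        (fun k hk => hN.trans_le (ha (Nat.le_of_lt_succ hk))) hb0 hpre htot
    · rw [sum_range_succ, sum_range_succ] at htot
      have hpreN := hpre N N.le_succ
      have hbN : b N = 0 := by linarith [hb0 N]
      rw [sum_range_succ, sum_range_succ, hbN, ← hN, negMulLog_zero, add_zero, add_zero]
      exact ih (fun i hi => hpre i (hi.trans N.le_succ)) (by linarith)

lemma sum_range_meet (p q : ℕ → ℝ) (i : ℕ) :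
    ∑ k ∈ range i, meet p q k = min (∑ k ∈ range i, p k) (∑ k ∈ range i, q k) := by
  simp only [meet]
  rw [sum_range_sub (fun i => min (∑ k ∈ range i, p k) (∑ k ∈ range i, q k))]
  simp

lemma meet_comm (p q : ℕ → ℝ) : meet p q = meet q p := by
  funext i
  simp only [meet, min_comm]

lemma meet_nonneg {p q : ℕ → ℝ} (hp0 : ∀ k, 0 ≤ p k) (hq0 : ∀ k, 0 ≤ q k) (i : ℕ) :
    0 ≤ meet p q i := by
  simp only [meet, sum_range_succ, sub_nonneg]
  exact min_le_min (le_add_of_nonneg_right (hp0 i)) (le_add_of_nonneg_right (hq0 i))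

lemma min_add_min_le_two_mul_min {x₁ x₂ x₃ y₁ y₂ y₃ : ℝ} (hx : x₁ + x₃ ≤ 2 * x₂)
    (hy : y₁ + y₃ ≤ 2 * y₂) : min x₁ y₁ + min x₃ y₃ ≤ 2 * min x₂ y₂ := by
  rcases le_total x₂ y₂ with h | h
  · linarith [min_eq_left h, min_le_left x₁ y₁, min_le_left x₃ y₃]
  · linarith [min_eq_right h, min_le_right x₁ y₁, min_le_right x₃ y₃]

lemma meet_antitone {p q : ℕ → ℝ} (hp : Antitone p) (hq : Antitone q) : Antitone (meet p q) := by
  refine antitone_nat_of_succ_le fun i => ?_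
  have hconc : ∀ f : ℕ → ℝ, Antitone f →
      ∑ k ∈ range i, f k + ∑ k ∈ range (i + 2), f k ≤ 2 * ∑ k ∈ range (i + 1), f k := by
    intro f hf
    simp only [sum_range_succ]
    linarith [hf i.le_succ]
  have := min_add_min_le_two_mul_min (hconc p hp) (hconc q hq)
  simp only [meet]
  linarith

lemma IsProbVec.pos {n : ℕ} {p : ℕ → ℝ} (hp : IsProbVec n p) : 0 < n := by
  rcases Nat.eq_zero_or_pos n with rfl | hn
  · simpa using hp.2.2.1
  · exact hn

lemma IsProbVec.sum_range_eq_one {n i : ℕ} {p : ℕ → ℝ} (hp : IsProbVec n p) (hi : n ≤ i) :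
    ∑ k ∈ range i, p k = 1 := by
  rw [← hp.2.2.1, eq_comm]
  exact sum_subset (range_subset_range.2 hi) fun k hk hk' => hp.2.2.2 k (by simpa using hk')

lemma IsProbVec.H2_eq {n i : ℕ} {p : ℕ → ℝ} (hp : IsProbVec n p) (hi : n ≤ i) :
    H2 i p = H2 n p := by
  refine (sum_subset (range_subset_range.2 hi) fun k _ hk => ?_).symm
  simp [hp.2.2.2 k (by simpa using hk)]

lemma sum_range_meet_eq_one {n m : ℕ} {p q : ℕ → ℝ} (hp : IsProbVec n p) (hq : IsProbVec m q) :
    ∑ k ∈ range (n * m), meet p q k = 1 := by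
  rw [sum_range_meet, hp.sum_range_eq_one (Nat.le_mul_of_pos_right n hq.pos),
    hq.sum_range_eq_one (Nat.le_mul_of_pos_left m hp.pos), min_self]

lemma H2_eq_sum_negMulLog (n : ℕ) (p : ℕ → ℝ) :
    H2 n p = (∑ k ∈ range n, negMulLog (p k)) / log 2 := by
  rw [H2, sum_div]
  refine sum_congr rfl fun k _ => ?_
  simp only [negMulLog, logb]
  ring

lemma Hmat_eq_sum_negMulLog (n m : ℕ) (M : ℕ → ℕ → ℝ) :
    Hmat n m M = (∑ i ∈ range n, ∑ j ∈ range m, negMulLog (M i j)) / log 2 := by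
  rw [Hmat, sum_div]
  refine sum_congr rfl fun i _ => ?_
  rw [sum_div]
  refine sum_congr rfl fun j _ => ?_
  simp only [negMulLog, logb]
  ring

lemma H2_le_H2_meet {n m : ℕ} {p q : ℕ → ℝ} (hp : IsProbVec n p) (hq : IsProbVec m q) :
    H2 n p ≤ H2 (n * m) (meet p q) := by
  have hnN : n ≤ n * m := Nat.le_mul_of_pos_right n hq.pos
  rw [← hp.H2_eq hnN, H2_eq_sum_negMulLog, H2_eq_sum_negMulLog]
  refine div_le_div_of_nonneg_right ?_ (log_nonneg one_le_two)
  refine sum_negMulLog_le_of_prefix_le (meet_antitone hp.2.1 hq.2.1) (meet_nonneg hp.1 hq.1) hp.1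
    (fun i _ => ?_) ?_
  · rw [sum_range_meet]
    exact min_le_left _ _
  · rw [sum_range_meet_eq_one hp hq, hp.sum_range_eq_one hnN]

lemma sum_le_sum_range_card {p : ℕ → ℝ} (hp : Antitone p) (R : Finset ℕ) :
    ∑ r ∈ R, p r ≤ ∑ k ∈ range #R, p k := by
  induction R using Finset.induction_on_max with
  | empty => simp
  | insert a R hlt ih =>
    have ha : a ∉ R := fun h => lt_irrefl a (hlt a h)
    have hcard : #R ≤ a := by
      simpa using card_le_card fun x hx => mem_range.2 (hlt x hx)
    rw [sum_insert ha, card_insert_of_notMem ha, sum_range_succ, add_comm]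
    exact add_le_add ih (hp hcard)

lemma exists_antitone_rearrangement {ι : Type*} [Fintype ι] (f : ι → ℝ) (hf : ∀ x, 0 ≤ f x) :
    ∃ y : ℕ → ℝ, Antitone y ∧ (∀ k, 0 ≤ y k) ∧
      (∀ F : ℝ → ℝ, ∑ k ∈ range (Fintype.card ι), F (y k) = ∑ x, F (f x)) ∧
      ∀ i ≤ Fintype.card ι, ∃ S : Finset ι, #S = i ∧ ∑ k ∈ range i, y k = ∑ x ∈ S, f x := by
  set N := Fintype.card ι
  set g : Fin N → ℝ := fun k => -f ((Fintype.equivFin ι).symm k)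
  set e : Fin N ≃ ι := (Tuple.sort g).trans (Fintype.equivFin ι).symm
  have he : Antitone (f ∘ e) := fun i j hij => by
    simpa [g, e] using Tuple.monotone_sort g hij
  let y : ℕ → ℝ := fun k => if h : k < N then f (e ⟨k, h⟩) else 0
  have hy0 : ∀ k, 0 ≤ y k := fun k => by
    simp only [y]
    split_ifs
    · exact hf _
    · exact le_rfl
  refine ⟨y, fun i j hij => ?_, hy0, fun F => ?_, fun i hi => ?_⟩
  · by_cases hj : j < N
    · simp only [y, dif_pos hj, dif_pos (hij.trans_lt hj)]
      exact he (show (⟨i, hij.trans_lt hj⟩ : Fin N) ≤ ⟨j, hj⟩ from hij)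
    · simp only [y, dif_neg hj] at hy0 ⊢
      exact hy0 i
  · rw [← Fin.sum_univ_eq_sum_range (fun k => F (y k)), ← e.sum_comp (fun x => F (f x))]
    simp [y]
  · refine ⟨univ.map ((Fin.castLEEmb hi).trans e.toEmbedding), by simp, ?_⟩
    rw [sum_map, ← Fin.sum_univ_eq_sum_range]
    refine sum_congr rfl fun k _ => ?_
    simp only [y, k.isLt.trans_le hi, dif_pos]
    rfl

lemma sum_le_sum_range_card_of_row_sums {n m : ℕ} {p : ℕ → ℝ} {M : ℕ → ℕ → ℝ} (hp : Antitone p)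
    (hp0 : ∀ k, 0 ≤ p k) (hM0 : ∀ i j, 0 ≤ M i j)
    (hrow : ∀ i < n, ∑ j ∈ range m, M i j = p i) (S : Finset (Fin n × Fin m)) :
    ∑ x ∈ S, M x.1 x.2 ≤ ∑ k ∈ range #S, p k :=
  calc ∑ x ∈ S, M x.1 x.2
      ≤ ∑ x ∈ S.image Prod.fst ×ˢ (univ : Finset (Fin m)), M x.1 x.2 :=
        sum_le_sum_of_subset_of_nonneg
          (fun x hx => mem_product.2 ⟨mem_image_of_mem _ hx, mem_univ _⟩) fun _ _ _ => hM0 _ _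
    _ = ∑ i ∈ (S.image Prod.fst).map Fin.valEmbedding, p i := by
        rw [sum_product, sum_map]
        exact sum_congr rfl fun i _ => (Fin.sum_univ_eq_sum_range (M i) m).trans (hrow i i.isLt)
    _ ≤ ∑ k ∈ range #((S.image Prod.fst).map Fin.valEmbedding), p k := sum_le_sum_range_card hp _
    _ ≤ ∑ k ∈ range #S, p k :=
        sum_le_sum_of_subset_of_nonneg (range_subset_range.2 (by simpa using card_image_le))
          fun k _ _ => hp0 k

lemma sum_le_sum_range_card_of_col_sums {n m : ℕ} {q : ℕ → ℝ} {M : ℕ → ℕ → ℝ} (hq : Antitone q)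
    (hq0 : ∀ k, 0 ≤ q k) (hM0 : ∀ i j, 0 ≤ M i j)
    (hcol : ∀ j < m, ∑ i ∈ range n, M i j = q j) (S : Finset (Fin n × Fin m)) :
    ∑ x ∈ S, M x.1 x.2 ≤ ∑ k ∈ range #S, q k := by
  simpa using sum_le_sum_range_card_of_row_sums (M := fun j i => M i j) hq hq0
    (fun j i => hM0 i j) hcol (S.map (Equiv.prodComm _ _).toEmbedding)

lemma sum_negMulLog_meet_le {n m : ℕ} {p q : ℕ → ℝ} {M : ℕ → ℕ → ℝ} (hp : IsProbVec n p)
    (hq : IsProbVec m q) (hM : IsCoupling n m p q M) :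
    ∑ k ∈ range (n * m), negMulLog (meet p q k)
      ≤ ∑ i ∈ range n, ∑ j ∈ range m, negMulLog (M i j) := by
  obtain ⟨y, hy, hy0, hyF, hyS⟩ :=
    exists_antitone_rearrangement (fun x : Fin n × Fin m => M x.1 x.2) fun _ => hM.1 _ _
  have hcard : Fintype.card (Fin n × Fin m) = n * m := by simp
  have hsum : ∀ F : ℝ → ℝ,
      ∑ k ∈ range (n * m), F (y k) = ∑ i ∈ range n, ∑ j ∈ range m, F (M i j) := by
    intro F
    rw [← hcard, hyF, Fintype.sum_prod_type, ← Fin.sum_univ_eq_sum_range]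
    exact sum_congr rfl fun i _ => Fin.sum_univ_eq_sum_range (fun j => F (M i j)) m
  rw [← hsum]
  refine sum_negMulLog_le_of_prefix_le hy hy0 (meet_nonneg hp.1 hq.1) (fun i hi => ?_) ?_
  · obtain ⟨S, rfl, hS⟩ := hyS i (hcard ▸ hi)
    rw [hS, sum_range_meet]
    exact le_min (sum_le_sum_range_card_of_row_sums hp.2.1 hp.1 hM.1 hM.2.1 S)
      (sum_le_sum_range_card_of_col_sums hq.2.1 hq.1 hM.1 hM.2.2 S)
  · rw [sum_range_meet_eq_one hp hq, ← hp.2.2.1]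
    exact (hsum id).trans (sum_congr rfl fun i hi => hM.2.1 i (mem_range.1 hi))

theorem stmt5 (n m : ℕ) (p q : ℕ → ℝ) (hp : IsProbVec n p) (hq : IsProbVec m q)
    (M : ℕ → ℕ → ℝ) (hM : IsCoupling n m p q M) :
    H2 n p + H2 m q - Hmat n m M ≤ H2 n p + H2 m q - H2 (n * m) (meet p q) ∧
    H2 n p + H2 m q - H2 (n * m) (meet p q) ≤ min (H2 n p) (H2 m q) := by
  have hmeet_le_M : H2 (n * m) (meet p q) ≤ Hmat n m M := by
    rw [H2_eq_sum_negMulLog, Hmat_eq_sum_negMulLog]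
    exact div_le_div_of_nonneg_right (sum_negMulLog_meet_le hp hq hM) (log_nonneg one_le_two)
  have hp_le_meet : H2 n p ≤ H2 (n * m) (meet p q) := H2_le_H2_meet hp hq
  have hq_le_meet : H2 m q ≤ H2 (n * m) (meet p q) := by
    rw [meet_comm, mul_comm]
    exact H2_le_H2_meet hq hp
  exact ⟨by linarith, le_min (by linarith) (by linarith)⟩
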